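/- Let T be a triangulated category, M a rigid object with Hom_T(M, Σ⁻¹M) = 0, and X, Y ∈ pr(M) with chosen presentation triangles M⁻¹_X →a_X M⁰_X →b_X X →c_X ΣM⁻¹_X and similarly for Y. Then the map ρ sending f : X → Σ⁻¹Y to −Σ⁻¹c_Y ∘ f ∘ b_X is a surjection from Hom_T(X, Σ⁻¹Y) onto {g : M⁰_X → M⁻¹_Y : g∘a_X = 0 and a_Y∘g = 0}, and its kernel consists exactly of morphisms factoring through a morphism of the form ΣM → Σ⁻¹M' with M, M' ∈ add(M). -/

import Mathlib

/-!
Write `m_Y : Σ⁻¹Y ⟶ M⁻¹_Y` for the first morphism of the inverse rotation of the presentation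
triangle of `Y`; then `ρ f = b_X ≫ f ≫ m_Y`. Everything follows from the long exact
`Hom`-sequences of the presentation triangle of `X` and of the (twice) inverse rotated triangle
of `Y`, once one knows that `Hom(A, Σ⁻¹B)` and `Hom(ΣA, B)` vanish for `A, B ∈ add M`. For
instance, if `ρ f = 0` then `b_X ≫ f` factors through `Σ⁻¹M⁰_Y`, hence vanishes, so `f` factors
as `c_X ≫ s'`; and `s' ≫ m_Y : ΣM⁻¹_X ⟶ M⁻¹_Y` vanishes, so `s'` factors through `Σ⁻¹M⁰_Y`.
-/

open CategoryTheory CategoryTheory.Limits CategoryTheory.Pretriangulated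

universe v u

variable {C : Type u} [Category.{v} C] [Preadditive C] [HasZeroObject C]
  [HasShift C ℤ] [∀ n : ℤ, (shiftFunctor C n).Additive] [Pretriangulated C]
  [HasFiniteBiproducts C]

/-- `X` belongs to `add M`: it is a direct summand of a finite direct sum of copies of `M`. -/
def InAdd (M X : C) : Prop :=
  ∃ (n : ℕ) (i : X ⟶ ⨁ (fun _ : Fin n => M)) (p : (⨁ (fun _ : Fin n => M)) ⟶ X),
    i ≫ p = 𝟙 X

/-- A morphism `w : X ⟶ ΣY` factors through an object of `add (ΣM)`. -/
def FactorsThroughAddShift (M : C) {X Y : C} (w : X ⟶ Y⟦(1 : ℤ)⟧) : Prop :=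
  ∃ (Z : C), InAdd M Z ∧ ∃ (f : X ⟶ Z⟦(1 : ℤ)⟧) (g : Z⟦(1 : ℤ)⟧ ⟶ Y⟦(1 : ℤ)⟧),
    w = f ≫ g

/-- `X` is finitely presented by `M`: there is a triangle `M⁻¹ → M⁰ → X → ΣM⁻¹`
with `M⁻¹, M⁰ ∈ add M`. -/
def Pr (M X : C) : Prop :=
  ∃ (Mm1 M0 : C), InAdd M Mm1 ∧ InAdd M M0 ∧
    ∃ (a : Mm1 ⟶ M0) (b : M0 ⟶ X) (c : X ⟶ Mm1⟦(1 : ℤ)⟧),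
      Triangle.mk a b c ∈ distTriang C

namespace InAdd

omit [HasZeroObject C] [HasShift C ℤ] [∀ n : ℤ, (shiftFunctor C n).Additive]
  [Pretriangulated C] in
lemma eq_zero_of_forall_eq_zero {M N A B : C} (hA : InAdd M A) (hB : InAdd N B)
    (h : ∀ f : M ⟶ N, f = 0) (φ : A ⟶ B) : φ = 0 := by
  obtain ⟨m, iA, pA, hA⟩ := hA
  obtain ⟨n, iB, pB, hB⟩ := hB
  have hsum : pA ≫ φ ≫ iB = 0 :=
    biproduct.hom_ext _ _ fun j => biproduct.hom_ext' _ _ fun k => by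
      simpa using h (biproduct.ι (fun _ : Fin m => M) k ≫ pA ≫ φ ≫ iB ≫
        biproduct.π (fun _ : Fin n => N) j)
  calc φ = iA ≫ (pA ≫ φ ≫ iB) ≫ pB := by simp [reassoc_of% hA, hB]
    _ = 0 := by rw [hsum, zero_comp, comp_zero]

omit [HasZeroObject C] [Pretriangulated C] in
lemma shift {M B : C} (hB : InAdd M B) (n : ℤ) : InAdd (M⟦n⟧) (B⟦n⟧) := by
  obtain ⟨k, i, p, hip⟩ := hB
  refine ⟨k, i⟦n⟧' ≫ ((shiftFunctor C n).mapBiproduct _).hom,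
    ((shiftFunctor C n).mapBiproduct _).inv ≫ p⟦n⟧', ?_⟩
  rw [Category.assoc, Iso.hom_inv_id_assoc, ← Functor.map_comp, hip, (shiftFunctor C n).map_id]

variable {M A B : C} (hr : ∀ f : M ⟶ M⟦(-1 : ℤ)⟧, f = 0)
include hr

omit [HasZeroObject C] [Pretriangulated C] in
lemma hom_shift_neg_one_eq_zero (hA : InAdd M A) (hB : InAdd M B) (φ : A ⟶ B⟦(-1 : ℤ)⟧) :
    φ = 0 :=
  eq_zero_of_forall_eq_zero hA (hB.shift (-1)) hr φ

lemma hom_from_shift_one_eq_zero (hA : InAdd M A) (hB : InAdd M B) (φ : A⟦(1 : ℤ)⟧ ⟶ B) :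
    φ = 0 := by
  have h0 : (shiftEquiv C (1 : ℤ)).toAdjunction.homEquiv A B 0 = 0 := by
    rw [Adjunction.homEquiv_apply]
    simp [shiftEquiv]
  exact ((shiftEquiv C (1 : ℤ)).toAdjunction.homEquiv A B).injective
    ((hom_shift_neg_one_eq_zero hr hA hB _).trans h0.symm)

end InAdd

section Presentation

variable {M : C} (hr : ∀ f : M ⟶ M⟦(-1 : ℤ)⟧, f = 0)
  {S U : Triangle C} (hS : S ∈ distTriang C) (hU : U ∈ distTriang C)
include hr hS hU

lemma exists_comp_comp_mor₁_eq (hS₁ : InAdd M S.obj₁) (hU₃ : InAdd M U.obj₃)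
    (g : S.obj₂ ⟶ U.obj₂) (hg₁ : S.mor₁ ≫ g = 0) (hg₂ : g ≫ U.mor₂ = 0) :
    ∃ f : S.obj₃ ⟶ U.obj₁, S.mor₂ ≫ f ≫ U.mor₁ = g := by
  obtain ⟨h, rfl⟩ := Triangle.yoneda_exact₂ _ hS g hg₁
  have hh : h ≫ U.mor₂ = 0 := by
    obtain ⟨k, hk⟩ := Triangle.yoneda_exact₃ _ hS (h ≫ U.mor₂) (by simpa using hg₂)
    rw [hk, InAdd.hom_from_shift_one_eq_zero hr hS₁ hU₃ k, comp_zero]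
  obtain ⟨f, rfl⟩ := Triangle.coyoneda_exact₂ _ hU h hh
  exact ⟨f, rfl⟩

lemma comp_comp_mor₁_eq_zero_iff (hS₁ : InAdd M S.obj₁) (hS₂ : InAdd M S.obj₂)
    (hU₂ : InAdd M U.obj₂) (hU₃ : InAdd M U.obj₃) (f : S.obj₃ ⟶ U.obj₁) :
    S.mor₂ ≫ f ≫ U.mor₁ = 0 ↔
      ∃ (M1 M2 : C), InAdd M M1 ∧ InAdd M M2 ∧
        ∃ (u : S.obj₃ ⟶ M1⟦(1 : ℤ)⟧) (s : M1⟦(1 : ℤ)⟧ ⟶ M2⟦(-1 : ℤ)⟧)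
          (v : M2⟦(-1 : ℤ)⟧ ⟶ U.obj₁), f = u ≫ s ≫ v := by
  have hU' := inv_rot_of_distTriang _ hU
  constructor
  · intro h0
    have hbf : S.mor₂ ≫ f = 0 := by
      obtain ⟨t, ht⟩ := Triangle.coyoneda_exact₂ _ hU' (S.mor₂ ≫ f)
        ((Category.assoc _ _ _).trans h0)
      rw [InAdd.hom_shift_neg_one_eq_zero hr hS₂ hU₃ t] at ht
      exact ht.trans zero_comp
    obtain ⟨s', rfl⟩ := Triangle.yoneda_exact₃ _ hS f hbf
    obtain ⟨s, rfl⟩ := Triangle.coyoneda_exact₂ _ hU' s'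
      (InAdd.hom_from_shift_one_eq_zero hr hS₁ hU₂ _)
    exact ⟨S.obj₁, U.obj₃, hS₁, hU₃, S.mor₃, s, U.invRotate.mor₁, rfl⟩
  · rintro ⟨M1, M2, hM1, -, u, s, v, rfl⟩
    simp [InAdd.hom_from_shift_one_eq_zero hr hM1 hU₂ (s ≫ v ≫ U.mor₁)]

end Presentation

/-- Assume `M` is rigid and moreover `Hom(M, Σ⁻¹M) = 0`. For
`X, Y ∈ pr(M)` with chosen presentation triangles, the map
`ρ : f ↦ −Σ⁻¹c_Y ∘ f ∘ b_X` surjects `Hom(X, Σ⁻¹Y)` onto the set of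
`g : M⁰_X ⟶ M⁻¹_Y` with `g ∘ a_X = 0` and `a_Y ∘ g = 0`, and its kernel consists
exactly of the morphisms factoring through a morphism `ΣM₁ ⟶ Σ⁻¹M₂` with
`M₁, M₂ ∈ add M`. -/
theorem stmt17 (M X Y M1X M0X M1Y M0Y : C)
    (hrigidneg : ∀ f : M ⟶ M⟦(-1 : ℤ)⟧, f = 0)
    (h1X : InAdd M M1X) (h0X : InAdd M M0X) (h1Y : InAdd M M1Y) (h0Y : InAdd M M0Y)
    (aX : M1X ⟶ M0X) (bX : M0X ⟶ X) (cX : X ⟶ M1X⟦(1 : ℤ)⟧)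
    (aY : M1Y ⟶ M0Y) (bY : M0Y ⟶ Y) (cY : Y ⟶ M1Y⟦(1 : ℤ)⟧)
    (hTX : Triangle.mk aX bX cX ∈ distTriang C)
    (hTY : Triangle.mk aY bY cY ∈ distTriang C) :
    -- the map ρ
    ∀ ρ : (X ⟶ Y⟦(-1 : ℤ)⟧) → (M0X ⟶ M1Y),
      (∀ f : X ⟶ Y⟦(-1 : ℤ)⟧,
          ρ f = -(bX ≫ f ≫ cY⟦(-1 : ℤ)⟧' ≫
            (shiftFunctorCompIsoId C (1 : ℤ) (-1 : ℤ) (by ring)).hom.app M1Y)) →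
      -- ρ lands in Hom(P(X), Σ⁻¹P(Y))
      (∀ f : X ⟶ Y⟦(-1 : ℤ)⟧, aX ≫ ρ f = 0 ∧ ρ f ≫ aY = 0) ∧
      -- ρ is surjective onto that set
      (∀ g : M0X ⟶ M1Y, aX ≫ g = 0 → g ≫ aY = 0 →
          ∃ f : X ⟶ Y⟦(-1 : ℤ)⟧, ρ f = g) ∧
      -- the kernel of ρ
      (∀ f : X ⟶ Y⟦(-1 : ℤ)⟧, ρ f = 0 ↔
          ∃ (M1 M2 : C), InAdd M M1 ∧ InAdd M M2 ∧
            ∃ (u : X ⟶ M1⟦(1 : ℤ)⟧) (s : M1⟦(1 : ℤ)⟧ ⟶ M2⟦(-1 : ℤ)⟧)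
              (v : M2⟦(-1 : ℤ)⟧ ⟶ Y⟦(-1 : ℤ)⟧), f = u ≫ s ≫ v) := by
  intro ρ hρ
  set mY : Y⟦(-1 : ℤ)⟧ ⟶ M1Y := (Triangle.mk aY bY cY).invRotate.mor₁
  have hU : Triangle.mk mY aY (Triangle.mk aY bY cY).invRotate.mor₃ ∈ distTriang C :=
    inv_rot_of_distTriang _ hTY
  have hmY' : mY = -(cY⟦(-1 : ℤ)⟧' ≫
      (shiftFunctorCompIsoId C (1 : ℤ) (-1 : ℤ) (by ring)).hom.app M1Y) :=
    Triangle.invRotate_mor₁ _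
  have hρm : ∀ f, ρ f = bX ≫ f ≫ mY := fun f => by
    rw [hρ f, hmY']
    simp only [Preadditive.comp_neg]
  have habX : aX ≫ bX = 0 := comp_distTriang_mor_zero₁₂ _ hTX
  have hmaY : mY ≫ aY = 0 := comp_distTriang_mor_zero₁₂ _ hU
  simp only [hρm]
  refine ⟨fun f => ⟨?_, ?_⟩, ?_, ?_⟩
  · rw [reassoc_of% habX, zero_comp]
  · rw [Category.assoc, Category.assoc, hmaY, comp_zero, comp_zero]
  · exact exists_comp_comp_mor₁_eq hrigidneg hTX hU h1X h0Y
  · exact comp_comp_mor₁_eq_zero_iff hrigidneg hTX hU h1X h0X h1Y h0Y
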